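/- arXiv:cs/9907031 — 4 statements merged into one kernel-verified Lean document; each statement's English description precedes it below -/
import Mathlib

section
/- Let a, b, c be points in the plane with dist(a,b) = 1 and angle ∠acb = θ where π/2 < θ < π. Then dist(a,c) + dist(c,b) ≤ −1/cos θ, i.e., the sum of the two shorter sides of a triangle with apex angle θ and unit base is at most −sec θ. -/
open Real EuclideanGeometry

theorem stmt3 (θ : ℝ) (hθ1 : π / 2 < θ) (hθ2 : θ < π) (a b c : ℂ)
    (hab : dist a b = 1) (hangle : EuclideanGeometry.angle a c b = θ) :
    dist a c + dist c b ≤ 2 * Real.sin ((π - θ) / 2) / Real.sin θ := by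
  have hlaw := EuclideanGeometry.law_cos a c b
  rw [hangle, hab] at hlaw
  set x := dist a c with hx
  set y := dist c b with hy
  have hbc : dist b c = y := dist_comm b c
  rw [hbc] at hlaw
  have hx0 : 0 ≤ x := dist_nonneg
  have hy0 : 0 ≤ y := dist_nonneg
  have hθ0 : 0 < θ := lt_trans (by positivity) hθ1
  have hs : 0 < Real.sin (θ/2) := Real.sin_pos_of_pos_of_lt_pi (by linarith) (by linarith)
  have hc : 0 < Real.cos (θ/2) := Real.cos_pos_of_mem_Ioo ⟨by linarith, by linarith⟩
  have hsq : Real.sin (θ/2) ^ 2 = (1 - Real.cos θ) / 2 := by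
    have h1 := Real.cos_two_mul (θ/2)
    have h2 := Real.sin_sq_add_cos_sq (θ/2)
    rw [show 2 * (θ/2) = θ by ring] at h1
    nlinarith
  have hsin : Real.sin θ = 2 * Real.sin (θ/2) * Real.cos (θ/2) := by
    have := Real.sin_two_mul (θ/2)
    rw [show 2 * (θ/2) = θ by ring] at this
    linarith
  have hrhs : 2 * Real.sin ((π - θ) / 2) / Real.sin θ = 1 / Real.sin (θ/2) := by
    have : Real.sin ((π - θ)/2) = Real.cos (θ/2) := by
      rw [show (π - θ)/2 = π/2 - θ/2 by ring, Real.sin_pi_div_two_sub]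
    rw [this, hsin]
    field_simp
  rw [hrhs]
  have key : ((x + y) * Real.sin (θ/2)) ^ 2 ≤ 1 := by
    have hcb : -1 ≤ Real.cos θ := Real.neg_one_le_cos θ
    nlinarith [mul_nonneg (sq_nonneg (x - y)) (by linarith : (0:ℝ) ≤ 1 + Real.cos θ)]
  have key2 : (x + y) * Real.sin (θ/2) ≤ 1 := by
    nlinarith [mul_nonneg (add_nonneg hx0 hy0) hs.le]
  rw [le_div_iff₀ hs]
  linarith
end

section
/- Let 0 < β ≤ 1 and let S be a finite set of points in the plane with a, b ∈ S. If the edge ab is NOT in the β-skeleton of S, then there exists c ∈ S \ {a, b} with ∠acb ≥ π − arcsin β, and then max(dist(a,c), dist(c,b)) < dist(a,b). Consequently, the recursive path-finding procedure (replace ab by ac and cb whenever ab is absent) terminates and produces a path from a to b in the β-skeleton. -/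
open Real EuclideanGeometry

/-- For `0 < β ≤ 1`, the edge `ab` belongs to the β-skeleton of `S` iff
no third point `c ∈ S` forms an angle `∠acb ≥ π − arcsin β`. -/
noncomputable def betaSkeletonEdge (β : ℝ) (S : Finset ℂ) (a b : ℂ) : Prop :=
  a ∈ S ∧ b ∈ S ∧ a ≠ b ∧
    ∀ c ∈ S, c ≠ a → c ≠ b →
      EuclideanGeometry.angle a c b < π - Real.arcsin β

private lemma chain_append {R : ℂ → ℂ → Prop} :
    ∀ (p : List ℂ) (a c q), List.Chain R a p → p.getLast? = some c ∨ (p = [] ∧ a = c) →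
      List.Chain R c q → List.Chain R a (p ++ q) := by
  intro p
  induction p with
  | nil =>
    rintro a c q _ (h | ⟨-, rfl⟩) hq
    · simp at h
    · simpa using hq
  | cons x p ih =>
    rintro a c q hch hl hq
    obtain ⟨hax, hch⟩ := List.isChain_cons_cons.mp hch
    refine List.Chain.cons hax (ih x c q hch ?_ hq)
    rcases hl with h | ⟨h, -⟩
    · rcases p with _ | ⟨y, p⟩
      · simp at h; exact Or.inr ⟨rfl, h⟩
      · left; simpa using h
    · simp at h

theorem stmt10 (β : ℝ) (hβ0 : 0 < β) (hβ1 : β ≤ 1) (S : Finset ℂ)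
    (a b : ℂ) (ha : a ∈ S) (hb : b ∈ S) (hab : a ≠ b) :
    (¬ betaSkeletonEdge β S a b →
      ∃ c ∈ S, c ≠ a ∧ c ≠ b ∧
        π - Real.arcsin β ≤ EuclideanGeometry.angle a c b ∧
        max (dist a c) (dist c b) < dist a b) ∧
    (∃ p : List ℂ, p.head? = some a ∧ p.getLast? = some b ∧
      p.Chain' (fun x y => betaSkeletonEdge β S x y)) := by
  set R : ℂ → ℂ → Prop := fun x y => betaSkeletonEdge β S x y with hR
  have part1 : ∀ x y : ℂ, x ∈ S → y ∈ S → x ≠ y → ¬ R x y →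
      ∃ c ∈ S, c ≠ x ∧ c ≠ y ∧
        π - Real.arcsin β ≤ EuclideanGeometry.angle x c y ∧
        max (dist x c) (dist c y) < dist x y := by
    intro x y hx hy hxy hnR
    simp only [hR, betaSkeletonEdge] at hnR
    push_neg at hnR
    obtain ⟨c, hcS, hcx, hcy, hang⟩ := hnR hx hy hxy
    refine ⟨c, hcS, hcx, hcy, hang, ?_⟩
    have hcos : Real.cos (EuclideanGeometry.angle x c y) ≤ 0 := by
      apply Real.cos_nonpos_of_pi_div_two_le_of_le
      · refine le_trans ?_ hang
        have := Real.arcsin_le_pi_div_two β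
        linarith
      · have := EuclideanGeometry.angle_le_pi x c y
        linarith [Real.pi_pos]
    have hlaw := EuclideanGeometry.law_cos x c y
    have h1 : (0:ℝ) < dist x c := dist_pos.mpr (fun h => hcx h.symm)
    have h2 : (0:ℝ) < dist y c := dist_pos.mpr (fun h => hcy h.symm)
    have h3 : (0:ℝ) ≤ dist x y := dist_nonneg
    have h4 : dist x c * dist x c + dist y c * dist y c ≤ dist x y * dist x y := by
      nlinarith [mul_nonneg (mul_pos h1 h2).le (neg_nonneg.2 hcos)]
    have hxc : dist x c < dist x y := by nlinarith [mul_pos h2 h2]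
    have hcy' : dist c y < dist x y := by
      rw [dist_comm c y]; nlinarith [mul_pos h1 h1]
    exact max_lt hxc hcy'
  have key : ∀ n : ℕ, ∀ x y : ℂ, x ∈ S → y ∈ S → x ≠ y →
      ((S ×ˢ S).filter (fun p => dist p.1 p.2 < dist x y)).card ≤ n →
      ∃ p : List ℂ, p ≠ [] ∧ List.Chain R x p ∧ p.getLast? = some y := by
    intro n
    induction n using Nat.strong_induction_on with
    | _ n ih =>
      intro x y hx hy hxy hcard
      by_cases hRxy : R x y
      · exact ⟨[y], by simp, List.Chain.cons hRxy List.Chain.nil, rfl⟩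
      · obtain ⟨c, hcS, hcx, hcy, -, hmax⟩ := part1 x y hx hy hxy hRxy
        rw [max_lt_iff] at hmax
        obtain ⟨hxc, hcyd⟩ := hmax
        have hlt : ∀ u v : ℂ, u ∈ S → v ∈ S → dist u v < dist x y →
            ((S ×ˢ S).filter (fun p => dist p.1 p.2 < dist u v)).card <
            ((S ×ˢ S).filter (fun p => dist p.1 p.2 < dist x y)).card := by
          intro u v hu hv huv
          apply Finset.card_lt_card
          rw [Finset.ssubset_iff_of_subset]
          · exact ⟨(u, v), by simp [hu, hv, huv], by simp⟩
          · intro pr hpr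
            simp only [Finset.mem_filter] at hpr ⊢
            exact ⟨hpr.1, lt_trans hpr.2 huv⟩
        obtain ⟨p, hpne, hpch, hpl⟩ :=
          ih _ (lt_of_lt_of_le (hlt x c hx hcS hxc) hcard) x c hx hcS
            (Ne.symm hcx) le_rfl
        obtain ⟨q, hqne, hqch, hql⟩ :=
          ih _ (lt_of_lt_of_le (hlt c y hcS hy hcyd) hcard) c y hcS hy hcy le_rfl
        refine ⟨p ++ q, by simp [hpne], ?_, ?_⟩
        · exact chain_append p x c q hpch (Or.inl hpl) hqch
        · simp [List.getLast?_append, hql]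
  constructor
  · intro hnR
    exact part1 a b ha hb hab hnR
  · obtain ⟨p, hpne, hch, hl⟩ := key _ a b ha hb hab le_rfl
    refine ⟨a :: p, rfl, ?_, hch⟩
    cases p with
    | nil => exact absurd rfl hpne
    | cons x t => simpa using hl
end

section
/- Single-leaf triangle-tree bound: let T be a finite sequence of triangles Δ₁, …, Δ_m where the hypotenuse of Δ₁ has length 1, the hypotenuse of Δ_{i+1} is one of the two shorter sides of Δ_i, and each Δ_i has apex angle (opposite its hypotenuse) at least θ > π/2. Then the sum Σ_i (perim(Δ_i) − 2·hyp(Δ_i)) + 1 ≤ −1/cos θ. -/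
open Real EuclideanGeometry

private lemma key_ineq (θ : ℝ) (hθ1 : π / 2 < θ) (hθ2 : θ < π) (A C B : ℂ)
    (h : θ ≤ ∠ A C B) :
    dist A C + (-Real.cos θ) * dist C B ≤ dist A B ∧
    dist C B + (-Real.cos θ) * dist A C ≤ dist A B := by
  have hθ0 : (0:ℝ) ≤ θ := by linarith [Real.pi_pos]
  have hcos : Real.cos (∠ A C B) ≤ Real.cos θ :=
    Real.cos_le_cos_of_nonneg_of_le_pi hθ0 (angle_le_pi A C B) h
  have hlc := EuclideanGeometry.law_cos A C B
  rw [show dist B C = dist C B from dist_comm B C] at hlc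
  have hu1 : -Real.cos θ ≤ 1 := by nlinarith [Real.neg_one_le_cos θ]
  have hu0 : 0 < -Real.cos θ := by
    have := Real.cos_neg_of_pi_div_two_lt_of_lt hθ1 (by linarith [Real.pi_pos])
    linarith
  have ha : (0:ℝ) ≤ dist A C := dist_nonneg
  have hb : (0:ℝ) ≤ dist C B := dist_nonneg
  have hc : (0:ℝ) ≤ dist A B := dist_nonneg
  have hab : (0:ℝ) ≤ 2 * (dist A C * dist C B) := by positivity
  have hm := mul_le_mul_of_nonneg_left hcos hab
  have hu2 : (0:ℝ) ≤ 1 - (-Real.cos θ) ^ 2 := by nlinarith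
  constructor
  · have hsq : (dist A C + (-Real.cos θ) * dist C B) ^ 2 ≤ dist A B ^ 2 := by
      nlinarith [hlc, hm, mul_nonneg (mul_nonneg hb hb) hu2]
    exact le_of_pow_le_pow_left₀ two_ne_zero hc hsq
  · have hsq : (dist C B + (-Real.cos θ) * dist A C) ^ 2 ≤ dist A B ^ 2 := by
      nlinarith [hlc, hm, mul_nonneg (mul_nonneg ha ha) hu2]
    exact le_of_pow_le_pow_left₀ two_ne_zero hc hsq

private lemma chain_bound (θ : ℝ) (hθ1 : π / 2 < θ) (hθ2 : θ < π) :
    ∀ n : ℕ, ∀ tri : Fin (n + 1) → ℂ × ℂ × ℂ,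
    (∀ i, θ ≤ EuclideanGeometry.angle (tri i).1 (tri i).2.2 (tri i).2.1) →
    (∀ i j : Fin (n + 1), (j : ℕ) = (i : ℕ) + 1 →
      dist (tri j).1 (tri j).2.1 = dist (tri i).1 (tri i).2.2 ∨
      dist (tri j).1 (tri j).2.1 = dist (tri i).2.1 (tri i).2.2) →
    ∑ i : Fin (n + 1),
        (dist (tri i).1 (tri i).2.2 + dist (tri i).2.2 (tri i).2.1
          - dist (tri i).1 (tri i).2.1)
      ≤ dist (tri 0).1 (tri 0).2.1 * (-1 / Real.cos θ - 1) := by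
  have hu0 : 0 < -Real.cos θ := by
    have := Real.cos_neg_of_pi_div_two_lt_of_lt hθ1 (by linarith [Real.pi_pos])
    linarith
  have hcne : Real.cos θ ≠ 0 := by linarith
  have hu1 : -Real.cos θ ≤ 1 := by nlinarith [Real.neg_one_le_cos θ]
  have hKu : (-1 / Real.cos θ - 1) * (-Real.cos θ) = 1 - (-Real.cos θ) := by
    field_simp; ring
  have hK0 : 0 ≤ -1 / Real.cos θ - 1 := by
    rw [← mul_le_mul_iff_left₀ hu0, zero_mul, hKu]; linarith
  intro n
  induction n with
  | zero =>
    intro tri hangle _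
    rw [Fin.sum_univ_one]
    obtain ⟨h1, h2⟩ := key_ineq θ hθ1 hθ2 (tri 0).1 (tri 0).2.2 (tri 0).2.1 (hangle 0)
    have hc : (0:ℝ) ≤ dist (tri 0).1 (tri 0).2.1 := dist_nonneg
    rw [← mul_le_mul_iff_left₀ hu0]
    nlinarith [h1, h2, hKu, hu0, hu1, hc,
      mul_nonneg hu0.le (sub_nonneg.2 h1), mul_nonneg hu0.le (sub_nonneg.2 h2),
      mul_nonneg (by linarith : (0:ℝ) ≤ 1 - (-Real.cos θ)) hc,
      (by linarith : (0:ℝ) < 1 + (-Real.cos θ))]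
  | succ k ih =>
    intro tri hangle hchain
    rw [Fin.sum_univ_succ]
    have htail := ih (fun i => tri i.succ) (fun i => hangle i.succ) (by
      intro i j hij
      exact hchain i.succ j.succ (by simp [Fin.val_succ, hij]))
    rw [show Fin.succ (0 : Fin (k+1)) = (1 : Fin (k+2)) from Fin.succ_zero_eq_one] at htail
    have hstep := hchain 0 1 (by simp)
    obtain ⟨h1, h2⟩ := key_ineq θ hθ1 hθ2 (tri 0).1 (tri 0).2.2 (tri 0).2.1 (hangle 0)
    have hb0 : (0:ℝ) ≤ dist (tri 0).2.2 (tri 0).2.1 := dist_nonneg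
    have ha0 : (0:ℝ) ≤ dist (tri 0).1 (tri 0).2.2 := dist_nonneg
    have hc0 : (0:ℝ) ≤ dist (tri 0).1 (tri 0).2.1 := dist_nonneg
    have key : dist (tri 1).1 (tri 1).2.1 * (-1 / Real.cos θ - 1)
        + (dist (tri 0).1 (tri 0).2.2 + dist (tri 0).2.2 (tri 0).2.1
            - dist (tri 0).1 (tri 0).2.1)
        ≤ dist (tri 0).1 (tri 0).2.1 * (-1 / Real.cos θ - 1) := by
      rcases hstep with hs | hs
      · rw [hs, ← mul_le_mul_iff_left₀ hu0]
        nlinarith [h1, hKu, ha0, hb0, hc0, hK0, hu0]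
      · rw [hs, show dist (tri 0).2.1 (tri 0).2.2 = dist (tri 0).2.2 (tri 0).2.1
            from dist_comm _ _, ← mul_le_mul_iff_left₀ hu0]
        nlinarith [h2, hKu, ha0, hb0, hc0, hK0, hu0]
    linarith

/-- Single-leaf triangle-tree bound.  `tri i = (Aᵢ, Bᵢ, Cᵢ)` is a sequence of
triangles with hypotenuse `AᵢBᵢ` and apex `Cᵢ`; the first hypotenuse has
length `1`, each subsequent hypotenuse is one of the two shorter sides of the
previous triangle, and every apex angle is at least `θ > π/2`.  Then the total
unfolded path length `1 + Σᵢ (perim − 2·hyp)` is at most `−1/cos θ`. -/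
theorem stmt16 (θ : ℝ) (hθ1 : π / 2 < θ) (hθ2 : θ < π)
    (m : ℕ) (hm : 1 ≤ m) (tri : Fin m → ℂ × ℂ × ℂ)
    (hyp1 : ∀ h0 : 0 < m, dist (tri ⟨0, h0⟩).1 (tri ⟨0, h0⟩).2.1 = 1)
    (hangle : ∀ i, θ ≤ EuclideanGeometry.angle (tri i).1 (tri i).2.2 (tri i).2.1)
    (hchain : ∀ i : Fin m, ∀ j : Fin m, (j : ℕ) = (i : ℕ) + 1 →
      dist (tri j).1 (tri j).2.1 = dist (tri i).1 (tri i).2.2 ∨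
      dist (tri j).1 (tri j).2.1 = dist (tri i).2.1 (tri i).2.2) :
    1 + ∑ i : Fin m,
        (dist (tri i).1 (tri i).2.2 + dist (tri i).2.2 (tri i).2.1
          - dist (tri i).1 (tri i).2.1) ≤ -1 / Real.cos θ := by
  obtain ⟨n, rfl⟩ : ∃ n, m = n + 1 := ⟨m - 1, by omega⟩
  have hb := chain_bound θ hθ1 hθ2 n tri hangle hchain
  have h1 : dist (tri 0).1 (tri 0).2.1 = 1 := by
    have := hyp1 (Nat.succ_pos n)
    simpa using this
  rw [h1, one_mul] at hb
  linarith
end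

section
/- If Δ is a triangle with apex angle θ ∈ (π/2, π) opposite a hypotenuse of length h, and a, b are the other two side lengths, then a + b − h ≤ (−1/cos θ − 1) · max(a, b). -/
open Real EuclideanGeometry

lemma key17 (a b h c : ℝ) (ha : 0 ≤ a) (hb : 0 ≤ b) (hba : b ≤ a) (hh : 0 ≤ h)
    (hc0 : 0 < c) (hc1 : c ≤ 1) (hlaw : h ^ 2 = a ^ 2 + b ^ 2 + 2 * a * b * c) :
    c * (a + b) - (1 - c) * a ≤ c * h := by
  rcases le_or_gt (c * (a + b) - (1 - c) * a) 0 with hL | hL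
  · exact hL.trans (by positivity)
  · have hch : 0 ≤ c * h := by positivity
    have h4 : 0 ≤ 4 * c ^ 2 - 3 * c + 1 := by nlinarith [sq_nonneg (8 * c - 3)]
    have hL2 : (c * (a + b) - (1 - c) * a) ^ 2 ≤ (c * h) ^ 2 := by
      nlinarith [mul_nonneg (mul_nonneg ha hL.le) (sq_nonneg (1 - c)),
        mul_nonneg (mul_nonneg (mul_nonneg ha ha) (sub_nonneg.2 hc1)) h4]
    nlinarith [hL2, hL, hch]

/-- One-step estimate: in a triangle with apex angle `θ ∈ (π/2, π)` opposite
the hypotenuse of length `h`, with other sides `a`, `b`, the excess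
`a + b − h` is at most `(−1/cos θ − 1) · max a b`. -/
theorem stmt17 (θ : ℝ) (hθ1 : π / 2 < θ) (hθ2 : θ < π)
    (x y z : ℂ) (hangle : EuclideanGeometry.angle x z y = θ) :
    dist x z + dist y z - dist x y ≤
      (-1 / Real.cos θ - 1) * max (dist x z) (dist y z) := by
  have hlaw := EuclideanGeometry.law_cos x z y
  rw [hangle] at hlaw
  have hcneg : Real.cos θ < 0 :=
    Real.cos_neg_of_pi_div_two_lt_of_lt hθ1 (by linarith [Real.pi_pos])
  have hcge : -1 ≤ Real.cos θ := Real.neg_one_le_cos θ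
  set c : ℝ := -Real.cos θ with hc
  have hc0 : 0 < c := by simp [hc]; linarith
  have hc1 : c ≤ 1 := by simp [hc]; linarith
  have heq : -1 / Real.cos θ - 1 = (1 - c) / c := by
    field_simp [hc]
    ring_nf
    rw [show (Real.cos θ)⁻¹ * c = -1 by rw [hc, mul_neg, inv_mul_cancel₀ hcneg.ne]]
    ring
  rw [heq]
  set a := dist x z
  set b := dist y z
  set h := dist x y
  have hlaw' : h ^ 2 = a ^ 2 + b ^ 2 + 2 * a * b * c := by
    rw [hc]; ring_nf; ring_nf at hlaw; linarith
  have ha : 0 ≤ a := dist_nonneg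
  have hb : 0 ≤ b := dist_nonneg
  have hh : 0 ≤ h := dist_nonneg
  rw [div_mul_eq_mul_div, le_div_iff₀ hc0]
  rcases le_total b a with hba | hba
  · rw [max_eq_left hba]
    have := key17 a b h c ha hb hba hh hc0 hc1 hlaw'
    nlinarith
  · rw [max_eq_right hba]
    have := key17 b a h c hb ha hba hh hc0 hc1 (by linarith [hlaw'])
    nlinarith
end
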